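/- arXiv:1912.02752 — 2 statements merged into one kernel-verified Lean document; each statement's English description precedes it below -/
import Mathlib

section
/- Let $g > 0$, $\mu' > 0$, $Q_z > 0$, and let $C_y, Q_y, O_y = 0$ be positions in the pivoting plane with $Q_y \neq 0$. If $(Q_y - C_y)\cdot(Q_y - O_y) > 0$ (i.e., $Q_y$ is not between $O_y = 0$ and $C_y$ in the $y$ direction), then there exists a force $f = (f_y, f_z)$ satisfying both the equilibrium line $f_z = (Q_z/Q_y) f_y + (1 - C_y/Q_y) g$ and the friction cone constraint $|f_y| \le \mu' f_z$. -/
/-- Theorem 1 (pivoting stability): if `(Q_y - C_y)(Q_y - O_y) > 0` with `O_y = 0`,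
then some contact force `(f_y, f_z)` satisfies equilibrium and the friction cone. -/
theorem stmt_1 (g μ' Cy Qy Qz : ℝ) (hg : 0 < g) (hμ : 0 < μ') (hQz : 0 < Qz)
    (hQy : Qy ≠ 0) (Oy : ℝ) (hOy : Oy = 0) (hstab : (Qy - Cy) * (Qy - Oy) > 0) :
    ∃ fy fz : ℝ, fz = (Qz / Qy) * fy + (1 - Cy / Qy) * g ∧ |fy| ≤ μ' * fz := by
  refine ⟨0, (1 - Cy / Qy) * g, by ring, ?_⟩
  rw [abs_zero]
  have hq2 : (0:ℝ) < Qy ^ 2 := by positivity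
  have heq : 1 - Cy / Qy = ((Qy - Cy) * (Qy - Oy)) / Qy ^ 2 := by
    rw [hOy]; field_simp; ring
  have h : 0 < 1 - Cy / Qy := heq ▸ div_pos hstab hq2
  positivity
end

section
/- Suppose $0 \le Q_y - C_y$ and $0 < Q_y$ (so the stability condition $(Q_y - C_y)(Q_y - O_y) > 0$ holds with $O_y = 0$ and $C_y \le Q_y$, $Q_y > 0$), and suppose the grasp point lies outside the friction cone, i.e. $Q_y > \mu' Q_z$ with $Q_z > 0$. Then the set of friction forces $f_y$ for which there exists $f_z$ with $f_z = (Q_z/Q_y) f_y + (1 - C_y/Q_y) g$ and $|f_y| \le \mu' f_z$ is bounded. -/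
/-- Theorem 2 (sliding): if the grasp point lies outside the friction cone
(`Q_y > μ' Q_z`), the set of equilibrium-compatible friction forces `f_y` is bounded. -/
theorem stmt_3 (g μ' Cy Qy Qz : ℝ) (hg : 0 < g) (hμ : 0 < μ')
    (hC : 0 ≤ Qy - Cy) (hQy : 0 < Qy) (hQz : 0 < Qz) (hcone : Qy > μ' * Qz) :
    Bornology.IsBounded {fy : ℝ | ∃ fz : ℝ,
      fz = (Qz / Qy) * fy + (1 - Cy / Qy) * g ∧ |fy| ≤ μ' * fz} := by
  set k : ℝ := μ' * Qz / Qy with hk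
  have hk1 : k < 1 := (div_lt_one hQy).mpr hcone
  have hk0 : 0 < k := div_pos (mul_pos hμ hQz) hQy
  set c : ℝ := μ' * ((1 - Cy / Qy) * g) with hc
  have hc0 : 0 ≤ c := by
    apply mul_nonneg hμ.le
    apply mul_nonneg _ hg.le
    have : Cy / Qy ≤ 1 := (div_le_one hQy).mpr (by linarith)
    linarith
  set B : ℝ := c / (1 - k) with hB
  apply (Metric.isBounded_Icc (-B) B).subset
  rintro fy ⟨fz, hfz, hle⟩
  have key : |fy| ≤ k * fy + c := by
    rw [hfz] at hle
    calc |fy| ≤ μ' * ((Qz / Qy) * fy + (1 - Cy / Qy) * g) := hle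
    _ = k * fy + c := by rw [hk, hc]; ring
  have habs : |fy| ≤ k * |fy| + c := le_trans key (by nlinarith [le_abs_self fy])
  have hBle : |fy| ≤ B := by
    rw [hB, le_div_iff₀ (by linarith)]
    nlinarith
  exact abs_le.mp hBle
end
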